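/- arXiv:1601.02060 — 2 statements merged into one kernel-verified Lean document; each statement's English description precedes it below -/
import Mathlib

section
/- For every real k > 0, every d > 0, and all x, x₁, t ∈ ℝ³ with |x − x₁| ≥ d and |t − x₁| ≤ d/2, one has |g(x,t) − g(x,x₁)| ≤ (1 + kd)·|t − x₁|/(π d²). -/
/-!
With `a = |x - t|` and `b = |x - x₁|`, split
`e^{ika}/a - e^{ikb}/b = (e^{ika} - e^{ikb})/a + e^{ikb} (b - a)/(ab)`.
Since `θ ↦ e^{iθ}` is 1-Lipschitz, the first term is at most `k |a - b| / a`, the second at most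
`|a - b| / (ab)`. The triangle inequality gives `|a - b| ≤ |t - x₁|`, `a ≥ d/2` and `b ≥ d`, which
yields the bound with a factor 2 to spare.
-/

open Real

noncomputable section

/-- The Helmholtz Green's function `g(x,y) = exp(ik|x-y|)/(4π|x-y|)` on ℝ³. -/
def g (k : ℝ) (x y : EuclideanSpace ℝ (Fin 3)) : ℂ :=
  Complex.exp (Complex.I * k * ‖x - y‖) / (4 * π * ‖x - y‖)

open Complex in
lemma norm_exp_I_mul_sub_exp_I_mul_le (a b : ℝ) :
    ‖exp (I * a) - exp (I * b)‖ ≤ |a - b| := by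
  have h : exp (I * a) - exp (I * b) = exp (I * b) * (exp (I * ↑(a - b)) - 1) := by
    rw [mul_sub, ← Complex.exp_add]
    push_cast
    ring_nf
  rw [h, norm_mul, norm_exp_I_mul_ofReal, one_mul, ← Real.norm_eq_abs]
  exact Real.norm_exp_I_mul_ofReal_sub_one_le

open Complex in
lemma norm_exp_I_mul_div_sub_exp_I_mul_div_le {k a b : ℝ} (ha : 0 < a) (hb : 0 < b) :
    ‖exp (I * k * a) / a - exp (I * k * b) / b‖ ≤ (|k| / a + 1 / (a * b)) * |a - b| := by
  have hsplit : exp (I * k * a) / a - exp (I * k * b) / b =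
      (exp (I * ↑(k * a)) - exp (I * ↑(k * b))) / a +
        exp (I * ↑(k * b)) * ↑((b - a) / (a * b)) := by
    have : (a : ℂ) ≠ 0 := by exact_mod_cast ha.ne'
    have : (b : ℂ) ≠ 0 := by exact_mod_cast hb.ne'
    push_cast
    field_simp
    ring_nf
  calc _ ≤ ‖exp (I * ↑(k * a)) - exp (I * ↑(k * b))‖ / a + ‖((b - a) / (a * b) : ℝ)‖ := by
        rw [hsplit]
        refine (norm_add_le _ _).trans_eq ?_
        rw [norm_div, norm_mul, norm_exp_I_mul_ofReal, one_mul, norm_real, norm_real,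
          Real.norm_of_nonneg ha.le]
    _ ≤ |k * a - k * b| / a + |a - b| / (a * b) := by
        rw [Real.norm_eq_abs, abs_div, abs_sub_comm b, abs_of_pos (mul_pos ha hb)]
        gcongr
        exact norm_exp_I_mul_sub_exp_I_mul_le _ _
    _ = (|k| / a + 1 / (a * b)) * |a - b| := by
        rw [← mul_sub, abs_mul]
        ring

lemma g_sub_g_eq (k : ℝ) (x y z : EuclideanSpace ℝ (Fin 3)) :
    g k x y - g k x z = (Complex.exp (Complex.I * k * ‖x - y‖) / ‖x - y‖ -
      Complex.exp (Complex.I * k * ‖x - z‖) / ‖x - z‖) / (4 * π) := by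
  simp only [g]
  ring

lemma norm_g_sub_g_le (k : ℝ) {x y z : EuclideanSpace ℝ (Fin 3)} (hy : 0 < ‖x - y‖)
    (hz : 0 < ‖x - z‖) :
    ‖g k x y - g k x z‖ ≤ (|k| / ‖x - y‖ + 1 / (‖x - y‖ * ‖x - z‖)) * ‖y - z‖ / (4 * π) := by
  have hyz : |‖x - y‖ - ‖x - z‖| ≤ ‖y - z‖ := by
    simpa [norm_sub_rev z y] using abs_norm_sub_norm_le (x - y) (x - z)
  rw [g_sub_g_eq, norm_div, show ‖(4 * π : ℂ)‖ = 4 * π by simp [abs_of_pos pi_pos]]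
  gcongr
  exact (norm_exp_I_mul_div_sub_exp_I_mul_div_le hy hz).trans (by gcongr)

/-- for `k > 0`, `d > 0`, `|x − x₁| ≥ d` and `|t − x₁| ≤ d/2`, one has
`|g(x,t) − g(x,x₁)| ≤ (1 + kd)·|t − x₁|/(π d²)`. -/
theorem g_lipschitz_second_arg (k : ℝ) (hk : 0 < k) (d : ℝ) (hd : 0 < d)
    (x x₁ t : EuclideanSpace ℝ (Fin 3)) (hx : d ≤ ‖x - x₁‖) (ht : ‖t - x₁‖ ≤ d / 2) :
    ‖g k x t - g k x x₁‖ ≤ (1 + k * d) * ‖t - x₁‖ / (π * d ^ 2) := by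
  have hxt : d / 2 ≤ ‖x - t‖ := by
    have := norm_sub_le_norm_sub_add_norm_sub x t x₁
    linarith
  calc ‖g k x t - g k x x₁‖
      ≤ (k / ‖x - t‖ + 1 / (‖x - t‖ * ‖x - x₁‖)) * ‖t - x₁‖ / (4 * π) := by
        simpa only [abs_of_pos hk] using norm_g_sub_g_le k (by linarith) (by linarith)
    _ ≤ (k / (d / 2) + 1 / (d / 2 * d)) * ‖t - x₁‖ / (4 * π) := by gcongr
    _ = (1 + k * d) * ‖t - x₁‖ / (π * d ^ 2) / 2 := by
        field_simp
        ring
    _ ≤ (1 + k * d) * ‖t - x₁‖ / (π * d ^ 2) := half_le_self (by positivity)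

end
end

section
/- There is an absolute constant C > 0 such that for every real k > 0, every d > 0, and all x, x₁, t ∈ ℝ³ with |x − x₁| ≥ d and |t − x₁| ≤ d/2, the gradients in the first variable satisfy ‖∇ₓg(x,t) − ∇ₓg(x,x₁)‖ ≤ C·|t − x₁|·(1 + kd + k²d²)/d³. -/
/-!
Away from the diagonal, `∇ₓg(x, y) = ψ(|x - y|) (x - y)` with `ψ(r) = e^{ikr}(ikr - 1)/(4πr³)`, so
`y ↦ ∇ₓg(x, y)` is the radial field `u ↦ ψ(|u|) u` evaluated at `u = x - y`. The derivative of a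
radial field has operator norm at most `|ψ(r)| + r |ψ'(r)|`, and the identity
`r ψ'(r) = -k² e^{ikr}/(4πr) - 3 ψ(r)` bounds this by `(kr + 2)²/(4πr³)`. Every point of the ball of
radius `d/2` around `x - x₁` has norm at least `d/2`, so the mean value inequality on that ball gives
the estimate with `C = 8/π`.
-/

open Real

noncomputable section

/-- The gradient of `g` in its first variable: the vector in ℂ³ of partial derivatives. -/
def gradg (k : ℝ) (x y : EuclideanSpace ℝ (Fin 3)) : EuclideanSpace ℂ (Fin 3) :=
  (WithLp.equiv 2 (Fin 3 → ℂ)).symm fun j =>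
    fderiv ℝ (fun x' => g k x' y) x (EuclideanSpace.single j 1)

section Profiles

open Complex

def greenProfile (k r : ℝ) : ℂ := exp (I * k * r) / (4 * π * r)

def gradProfile (k r : ℝ) : ℂ := exp (I * k * r) * (I * k * r - 1) / (4 * π * r ^ 3)

def gradProfileDeriv (k r : ℝ) : ℂ := -(k ^ 2 * greenProfile k r + 3 * gradProfile k r) / r

variable {k r : ℝ}

theorem hasDerivAt_greenProfile (hr : r ≠ 0) :
    HasDerivAt (greenProfile k) (gradProfile k r * r) r := by
  have hr' : (r : ℂ) ≠ 0 := ofReal_ne_zero.mpr hr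
  have hπ : (π : ℂ) ≠ 0 := ofReal_ne_zero.mpr pi_ne_zero
  have h := (((hasDerivAt_id (r : ℂ)).const_mul (I * k)).cexp.div
    ((hasDerivAt_id (r : ℂ)).const_mul (4 * (π : ℂ))) (by simp [hr', hπ])).comp_ofReal
  refine h.congr_deriv ?_
  simp only [gradProfile, id]
  field_simp

theorem hasDerivAt_gradProfile (hr : r ≠ 0) :
    HasDerivAt (gradProfile k) (gradProfileDeriv k r) r := by
  have hr' : (r : ℂ) ≠ 0 := ofReal_ne_zero.mpr hr
  have hπ : (π : ℂ) ≠ 0 := ofReal_ne_zero.mpr pi_ne_zero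
  have hlin := (hasDerivAt_id (r : ℂ)).const_mul (I * k)
  have h := ((hlin.cexp.mul (hlin.sub_const 1)).div
    ((hasDerivAt_pow 3 (r : ℂ)).const_mul (4 * (π : ℂ))) (by simp [hr', hπ])).comp_ofReal
  refine h.congr_deriv ?_
  simp only [gradProfileDeriv, gradProfile, greenProfile, id, Pi.mul_apply]
  field_simp
  push_cast
  linear_combination ((k : ℂ) ^ 2 * r ^ 4) * I_sq

theorem norm_exp_I_mul_mul (k r : ℝ) : ‖exp (I * k * r)‖ = 1 := by
  rw [mul_assoc, ← ofReal_mul, norm_exp_I_mul_ofReal]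

theorem norm_greenProfile (hr : 0 < r) : ‖greenProfile k r‖ = 1 / (4 * π * r) := by
  rw [greenProfile, norm_div, norm_exp_I_mul_mul]
  norm_cast
  rw [norm_of_nonneg (by positivity)]

theorem norm_gradProfile_le (hk : 0 ≤ k) (hr : 0 < r) :
    ‖gradProfile k r‖ ≤ (k * r + 1) / (4 * π * r ^ 3) := by
  rw [gradProfile, norm_div, norm_mul, norm_exp_I_mul_mul, one_mul]
  have hden : ‖(4 * π * r ^ 3 : ℂ)‖ = 4 * π * r ^ 3 := by
    norm_cast
    rw [norm_of_nonneg (by positivity)]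
  have hnum : ‖I * k * r - 1‖ ≤ k * r + 1 := by
    refine (norm_sub_le _ _).trans ?_
    simp [abs_of_nonneg hk, abs_of_nonneg hr.le]
  rw [hden]
  gcongr

theorem norm_gradProfile_add_mul_norm_deriv_le (hk : 0 ≤ k) (hr : 0 < r) :
    ‖gradProfile k r‖ + r * ‖gradProfileDeriv k r‖ ≤ (k * r + 2) ^ 2 / (4 * π * r ^ 3) := by
  have hψ := norm_gradProfile_le hk hr
  have hderiv :
      r * ‖gradProfileDeriv k r‖ ≤ k ^ 2 * ‖greenProfile k r‖ + 3 * ‖gradProfile k r‖ := by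
    rw [gradProfileDeriv, norm_div, norm_neg, norm_real, norm_of_nonneg hr.le,
      mul_div_cancel₀ _ hr.ne']
    refine (norm_add_le _ _).trans_eq ?_
    norm_cast
    simp [abs_of_nonneg hk]
  rw [norm_greenProfile hr] at hderiv
  calc ‖gradProfile k r‖ + r * ‖gradProfileDeriv k r‖
      ≤ 4 * ((k * r + 1) / (4 * π * r ^ 3)) + k ^ 2 * (1 / (4 * π * r)) := by linarith
    _ = (k * r + 2) ^ 2 / (4 * π * r ^ 3) := by field_simp; ring

end Profiles

theorem hasFDerivAt_norm_of_ne_zero {E : Type*} [NormedAddCommGroup E] [InnerProductSpace ℝ E]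
    {x : E} (hx : x ≠ 0) : HasFDerivAt (‖·‖) (‖x‖⁻¹ • innerSL ℝ x) x := by
  have h := (hasStrictFDerivAt_norm_sq x).hasFDerivAt.sqrt (by simpa using hx)
  simp only [sqrt_sq (norm_nonneg _)] at h
  convert h using 1
  ext v
  simp
  field_simp

section RadialField

variable {ι : Type*} [Fintype ι]

def euclideanOfReal (ι : Type*) [Fintype ι] : EuclideanSpace ℝ ι →L[ℝ] EuclideanSpace ℂ ι :=
  LinearMap.toContinuousLinearMap
    { toFun u := WithLp.toLp 2 fun j => (u j : ℂ)
      map_add' u v := by ext j; simp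
      map_smul' c u := by ext j; simp }

@[simp] theorem euclideanOfReal_apply (u : EuclideanSpace ℝ ι) (j : ι) :
    euclideanOfReal ι u j = u j := rfl

@[simp] theorem norm_euclideanOfReal (u : EuclideanSpace ℝ ι) : ‖euclideanOfReal ι u‖ = ‖u‖ := by
  simp [EuclideanSpace.norm_eq]

theorem norm_euclideanOfReal_le : ‖euclideanOfReal ι‖ ≤ 1 :=
  ContinuousLinearMap.opNorm_le_bound _ zero_le_one fun u => by simp

def radialField (φ : ℝ → ℂ) (u : EuclideanSpace ℝ ι) : EuclideanSpace ℂ ι :=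
  φ ‖u‖ • euclideanOfReal ι u

theorem exists_hasFDerivAt_radialField {φ : ℝ → ℂ} {φ' : ℂ} {u : EuclideanSpace ℝ ι}
    (hu : u ≠ 0) (hφ : HasDerivAt φ φ' ‖u‖) :
    ∃ D : EuclideanSpace ℝ ι →L[ℝ] EuclideanSpace ℂ ι,
      HasFDerivAt (radialField φ) D u ∧ ‖D‖ ≤ ‖φ ‖u‖‖ + ‖u‖ * ‖φ'‖ := by
  have hc := hφ.hasFDerivAt.comp u (hasFDerivAt_norm_of_ne_zero hu)
  refine ⟨_, hc.smul (euclideanOfReal ι).hasFDerivAt, ?_⟩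
  set c := (ContinuousLinearMap.smulRight (1 : ℝ →L[ℝ] ℝ) φ').comp (‖u‖⁻¹ • innerSL ℝ u)
  have hc_norm : ‖c‖ ≤ ‖φ'‖ := by
    refine (ContinuousLinearMap.opNorm_comp_le _ _).trans ?_
    rw [ContinuousLinearMap.norm_smulRight_apply, norm_smul, innerSL_apply_norm, norm_inv,
      norm_norm, inv_mul_cancel₀ (norm_ne_zero_iff.mpr hu), norm_one, one_mul, mul_one]
  have hsmulRight : ‖c.smulRight (euclideanOfReal ι u)‖ ≤ ‖c‖ * ‖u‖ := by
    refine ContinuousLinearMap.opNorm_le_bound _ (by positivity) fun v => ?_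
    rw [ContinuousLinearMap.smulRight_apply, norm_smul, norm_euclideanOfReal]
    calc ‖c v‖ * ‖u‖ ≤ ‖c‖ * ‖v‖ * ‖u‖ := by gcongr; exact c.le_opNorm v
      _ = ‖c‖ * ‖u‖ * ‖v‖ := by ring
  calc ‖φ ‖u‖ • euclideanOfReal ι + c.smulRight (euclideanOfReal ι u)‖
      ≤ ‖φ ‖u‖‖ * ‖euclideanOfReal ι‖ + ‖c‖ * ‖u‖ :=
        (norm_add_le _ _).trans (add_le_add (ContinuousLinearMap.opNorm_smul_le _ _) hsmulRight)
    _ ≤ ‖φ ‖u‖‖ * 1 + ‖φ'‖ * ‖u‖ := by gcongr; exact norm_euclideanOfReal_le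
    _ = ‖φ ‖u‖‖ + ‖u‖ * ‖φ'‖ := by ring

theorem norm_radialField_sub_le {φ φ' : ℝ → ℂ} {s : Set (EuclideanSpace ℝ ι)} {M : ℝ}
    (hs : Convex ℝ s) (hs₀ : ∀ w ∈ s, w ≠ 0) (hφ : ∀ w ∈ s, HasDerivAt φ (φ' ‖w‖) ‖w‖)
    (hM : ∀ w ∈ s, ‖φ ‖w‖‖ + ‖w‖ * ‖φ' ‖w‖‖ ≤ M) {u v : EuclideanSpace ℝ ι}
    (hu : u ∈ s) (hv : v ∈ s) : ‖radialField φ u - radialField φ v‖ ≤ M * ‖u - v‖ := by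
  have hD w (hw : w ∈ s) := exists_hasFDerivAt_radialField (hs₀ w hw) (hφ w hw)
  refine hs.norm_image_sub_le_of_norm_fderiv_le (𝕜 := ℝ) (fun w hw => ?_) (fun w hw => ?_) hv hu
  · obtain ⟨D, hD, -⟩ := hD w hw
    exact hD.differentiableAt
  · obtain ⟨D, hD, hDM⟩ := hD w hw
    exact hD.fderiv ▸ hDM.trans (hM w hw)

end RadialField

theorem gradg_eq_radialField (k : ℝ) {x y : EuclideanSpace ℝ (Fin 3)} (hxy : x ≠ y) :
    gradg k x y = radialField (gradProfile k) (x - y) := by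
  have hu : x - y ≠ 0 := sub_ne_zero.mpr hxy
  have hr : ‖x - y‖ ≠ 0 := norm_ne_zero_iff.mpr hu
  have hg := (hasDerivAt_greenProfile (k := k) hr).hasFDerivAt.comp x
    ((hasFDerivAt_norm_of_ne_zero hu).comp x ((hasFDerivAt_id x).sub_const y))
  ext j
  rw [gradg, show (fun x' => g k x' y) = greenProfile k ∘ (‖·‖) ∘ fun x' => id x' - y from rfl,
    hg.fderiv]
  have hr' : ((‖x - y‖ : ℝ) : ℂ) ≠ 0 := by exact_mod_cast hr
  simp [radialField, EuclideanSpace.inner_single_right]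
  field_simp

theorem add_two_sq_div_le {k d r : ℝ} (hk : 0 ≤ k) (hd : 0 < d) (hr : d / 2 ≤ r) :
    (k * r + 2) ^ 2 / (4 * π * r ^ 3) ≤ 8 / π * (1 + k * d + k ^ 2 * d ^ 2) / d ^ 3 := by
  have hr₀ : 0 < r := by linarith
  calc (k * r + 2) ^ 2 / (4 * π * r ^ 3) = (k + 2 / r) ^ 2 / (4 * π * r) := by
        field_simp
    _ ≤ (k + 2 / (d / 2)) ^ 2 / (4 * π * (d / 2)) := by gcongr
    _ = (k * d + 4) ^ 2 / (2 * π * d ^ 3) := by field_simp; ring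
    _ ≤ 16 * (1 + k * d + k ^ 2 * d ^ 2) / (2 * π * d ^ 3) := by
        gcongr
        nlinarith [mul_nonneg hk hd.le]
    _ = 8 / π * (1 + k * d + k ^ 2 * d ^ 2) / d ^ 3 := by field_simp; ring

/-- there is an absolute constant `C > 0` such that for all `k > 0`, `d > 0`,
`|x − x₁| ≥ d`, `|t − x₁| ≤ d/2`, one has
`‖∇ₓg(x,t) − ∇ₓg(x,x₁)‖ ≤ C·|t − x₁|·(1 + kd + k²d²)/d³`. -/
theorem gradg_diff_estimate :
    ∃ C : ℝ, 0 < C ∧ ∀ (k : ℝ), 0 < k → ∀ (d : ℝ), 0 < d →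
      ∀ x x₁ t : EuclideanSpace ℝ (Fin 3), d ≤ ‖x - x₁‖ → ‖t - x₁‖ ≤ d / 2 →
        ‖gradg k x t - gradg k x x₁‖ ≤
          C * ‖t - x₁‖ * (1 + k * d + k ^ 2 * d ^ 2) / d ^ 3 := by
  refine ⟨8 / π, by positivity, fun k hk d hd x x₁ t hx ht => ?_⟩
  set s := Metric.closedBall (x - x₁) (d / 2)
  have hs_far : ∀ w ∈ s, d / 2 ≤ ‖w‖ := fun w hw => by
    rw [Metric.mem_closedBall, dist_eq_norm, norm_sub_rev] at hw
    linarith [norm_sub_norm_le (x - x₁) w]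
  have hs₀ : ∀ w ∈ s, w ≠ 0 := fun w hw => norm_pos_iff.mp ((half_pos hd).trans_le (hs_far w hw))
  have hxt : x - t ∈ s := by
    rwa [Metric.mem_closedBall, dist_eq_norm, sub_sub_sub_cancel_left, norm_sub_rev]
  have hxx₁ : x - x₁ ∈ s := Metric.mem_closedBall_self (by positivity)
  rw [gradg_eq_radialField k (sub_ne_zero.mp (hs₀ _ hxt)),
    gradg_eq_radialField k (sub_ne_zero.mp (hs₀ _ hxx₁))]
  calc _ ≤ 8 / π * (1 + k * d + k ^ 2 * d ^ 2) / d ^ 3 * ‖(x - t) - (x - x₁)‖ :=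
        norm_radialField_sub_le (convex_closedBall _ _) hs₀
          (fun w hw => hasDerivAt_gradProfile (norm_ne_zero_iff.mpr (hs₀ w hw)))
          (fun w hw => (norm_gradProfile_add_mul_norm_deriv_le hk.le
            (norm_pos_iff.mpr (hs₀ w hw))).trans (add_two_sq_div_le hk.le hd (hs_far w hw)))
          hxt hxx₁
    _ = 8 / π * ‖t - x₁‖ * (1 + k * d + k ^ 2 * d ^ 2) / d ^ 3 := by
        rw [sub_sub_sub_cancel_left, norm_sub_rev]
        ring

end
end
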